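/- arXiv:1709.06986 — 5 statements merged into one kernel-verified Lean document; each statement's English description precedes it below -/
import Mathlib

section
/- (Structure of the incremental function ℓ.) Let W ∈ ℝ^{k×m} and let ℓ : ℝⁿ × ℝⁿ → ℝᵏ satisfy ℓ(x, x) = 0 for all x ∈ ℝⁿ and the cocycle condition Wᵀ(ℓ(x₁, x₂) + ℓ(x₂, x₃) + ℓ(x₃, x₁)) = 0 for all x₁, x₂, x₃ ∈ ℝⁿ. Let r = dim ker(Wᵀ) and let T ∈ ℝ^{k×r} be any matrix whose columns form a basis of ker(Wᵀ). Then there exist functions l : ℝⁿ → ℝᵏ and q : ℝⁿ × ℝⁿ → ℝʳ with q(x, x) = 0 for all x ∈ ℝⁿ, such that ℓ(x, x̄) = l(x) − l(x̄) + T q(x, x̄) for all x, x̄ ∈ ℝⁿ. -/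
open Matrix

/-! Fixing the base point `0`, set `l x := ℓ(x, 0)`. Applying the cocycle condition to the
triples `(x, x̄, 0)` and `(0, x, x)` shows that `ℓ(x, x̄) − l(x) + l(x̄)` lies in `ker Wᵀ`, the
column space of `T`. A linear section of `T` over its column space turns this discrepancy
into `T q(x, x̄)`, and linearity of the section makes `q` vanish where the discrepancy does,
in particular on the diagonal. -/

theorem sub_sub_mem_of_cocycle {X M : Type*} [AddCommGroup M] (K : AddSubgroup M)
    (ell : X → X → M) (hzero : ∀ x, ell x x = 0)
    (hcocycle : ∀ x₁ x₂ x₃, ell x₁ x₂ + ell x₂ x₃ + ell x₃ x₁ ∈ K) (x₀ x y : X) :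
    ell x y - (ell x x₀ - ell y x₀) ∈ K := by
  have hxy := hcocycle x y x₀
  have hxx := hcocycle x₀ x x
  rw [hzero, add_zero] at hxx
  convert K.sub_mem hxy hxx using 1
  abel

theorem LinearMap.exists_lift_of_forall_mem_range {K V W α : Type*} [DivisionRing K]
    [AddCommGroup V] [Module K V] [AddCommGroup W] [Module K W] (f : V →ₗ[K] W) (d : α → W)
    (hd : ∀ a, d a ∈ LinearMap.range f) :
    ∃ q : α → V, ∀ a, f (q a) = d a ∧ (d a = 0 → q a = 0) := by
  obtain ⟨g, hg⟩ := f.rangeRestrict.exists_rightInverse_of_surjective f.range_rangeRestrict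
  refine ⟨fun a => g ⟨d a, hd a⟩, fun a => ⟨?_, fun h => ?_⟩⟩
  · exact congrArg Subtype.val (LinearMap.congr_fun hg ⟨d a, hd a⟩)
  · dsimp only
    rw [show (⟨d a, hd a⟩ : LinearMap.range f) = 0 from Subtype.ext h, map_zero]

theorem ell_structure_general {n k m r : ℕ}
    (W : Matrix (Fin k) (Fin m) ℝ)
    (ell : (Fin n → ℝ) → (Fin n → ℝ) → (Fin k → ℝ))
    (hzero : ∀ x, ell x x = 0)
    (hcocycle : ∀ x1 x2 x3, Wᵀ.mulVec (ell x1 x2 + ell x2 x3 + ell x3 x1) = 0)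
    (T : Matrix (Fin k) (Fin r) ℝ)
    (hspan : Submodule.span ℝ (Set.range fun j : Fin r => Tᵀ j) =
      LinearMap.ker Wᵀ.mulVecLin) :
    ∃ (l : (Fin n → ℝ) → (Fin k → ℝ)) (q : (Fin n → ℝ) → (Fin n → ℝ) → (Fin r → ℝ)),
      (∀ x, q x x = 0) ∧
      ∀ x xbar, ell x xbar = l x - l xbar + T.mulVec (q x xbar) := by
  set l : (Fin n → ℝ) → (Fin k → ℝ) := fun x => ell x 0
  have hrange : LinearMap.range T.mulVecLin = LinearMap.ker Wᵀ.mulVecLin := by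
    rw [Matrix.range_mulVecLin, ← hspan]
    rfl
  have hdiscr : ∀ p : (Fin n → ℝ) × (Fin n → ℝ),
      ell p.1 p.2 - (l p.1 - l p.2) ∈ LinearMap.range T.mulVecLin := fun p => by
    rw [hrange]
    exact sub_sub_mem_of_cocycle (LinearMap.ker Wᵀ.mulVecLin).toAddSubgroup ell hzero
      hcocycle 0 p.1 p.2
  obtain ⟨q, hq⟩ := T.mulVecLin.exists_lift_of_forall_mem_range _ hdiscr
  refine ⟨l, fun x xbar => q (x, xbar), fun x => (hq (x, x)).2 (by simp [hzero]), ?_⟩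
  intro x xbar
  have hlift := (hq (x, xbar)).1
  rw [Matrix.mulVecLin_apply] at hlift
  rw [hlift]
  abel

/-- **Structure of the incremental function ℓ.** If `ℓ(x,x) = 0` and `Wᵀ` annihilates the
cocycle `ℓ(x₁,x₂) + ℓ(x₂,x₃) + ℓ(x₃,x₁)`, and the columns of `T` form a basis of `ker(Wᵀ)`
(whose dimension is `r`), then `ℓ(x, x̄) = l(x) − l(x̄) + T q(x, x̄)` for some `l` and some
`q` vanishing on the diagonal. -/
theorem ell_structure {n k m r : ℕ}
    (W : Matrix (Fin k) (Fin m) ℝ)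
    (ell : (Fin n → ℝ) → (Fin n → ℝ) → (Fin k → ℝ))
    (hzero : ∀ x, ell x x = 0)
    (hcocycle : ∀ x1 x2 x3, Wᵀ.mulVec (ell x1 x2 + ell x2 x3 + ell x3 x1) = 0)
    (hr : r = Module.finrank ℝ (LinearMap.ker Wᵀ.mulVecLin))
    (T : Matrix (Fin k) (Fin r) ℝ)
    (hind : LinearIndependent ℝ (fun j : Fin r => Tᵀ j))
    (hspan : Submodule.span ℝ (Set.range fun j : Fin r => Tᵀ j) =
      LinearMap.ker Wᵀ.mulVecLin) :
    ∃ (l : (Fin n → ℝ) → (Fin k → ℝ)) (q : (Fin n → ℝ) → (Fin n → ℝ) → (Fin r → ℝ)),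
      (∀ x, q x x = 0) ∧
      ∀ x xbar, ell x xbar = l x - l xbar + T.mulVec (q x xbar) :=
  ell_structure_general W ell hzero hcocycle T hspan
end

section
/- (I/O relation constraint.) Suppose that for every equilibrium pair (x̄, ū) there exists a differentiable storage function V_{x̄} : ℝⁿ → [0, ∞) with V_{x̄}(x̄) = 0 such that ⟨∇V_{x̄}(x), f(x) + Gu⟩ ≤ w(u − ū, (h(x) + Ju) − ȳ) for all x ∈ ℝⁿ and u ∈ ℝᵐ. Then for any two equilibrium pairs (x̄, ū) and (x̃, ũ), with equilibrium outputs ȳ = h(x̄) + Jū and ỹ = h(x̃) + Jũ, it holds that (ȳ − ỹ)ᵀQ(ȳ − ỹ) + 2(ȳ − ỹ)ᵀS(ū − ũ) + (ū − ũ)ᵀR(ū − ũ) ≥ 0. -/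
open Matrix

/-- **I/O relation constraint for EID systems.** If the control-affine system
`ẋ = f(x) + Gu`, `y = h(x) + Ju` admits, for every equilibrium pair, a nonnegative
differentiable storage function vanishing at the equilibrium and satisfying the EID
dissipation inequality with quadratic supply rate `(Q, S, R)`, then any two equilibrium
input/output pairs satisfy the quadratic nonnegativity constraint. -/
theorem eid_io_relation_constraint {n m p : ℕ}
    (f : (Fin n → ℝ) → (Fin n → ℝ)) (h : (Fin n → ℝ) → (Fin p → ℝ))
    (G : Matrix (Fin n) (Fin m) ℝ) (J : Matrix (Fin p) (Fin m) ℝ)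
    (Q : Matrix (Fin p) (Fin p) ℝ) (S : Matrix (Fin p) (Fin m) ℝ)
    (R : Matrix (Fin m) (Fin m) ℝ)
    (hQ : Q.IsSymm) (hR : R.IsSymm) (hG : G.rank = m)
    (hEID : ∀ xbar ubar, f xbar + G.mulVec ubar = 0 →
      ∃ (V : (Fin n → ℝ) → ℝ) (gradV : (Fin n → ℝ) → (Fin n → ℝ)),
        Differentiable ℝ V ∧ (∀ x v, (fderiv ℝ V x) v = gradV x ⬝ᵥ v) ∧
        (∀ x, 0 ≤ V x) ∧ V xbar = 0 ∧
        ∀ x u, gradV x ⬝ᵥ (f x + G.mulVec u) ≤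
          ((h x + J.mulVec u) - (h xbar + J.mulVec ubar)) ⬝ᵥ
              Q.mulVec ((h x + J.mulVec u) - (h xbar + J.mulVec ubar))
          + 2 * (((h x + J.mulVec u) - (h xbar + J.mulVec ubar)) ⬝ᵥ S.mulVec (u - ubar))
          + (u - ubar) ⬝ᵥ R.mulVec (u - ubar)) :
    ∀ xbar ubar xtil util,
      f xbar + G.mulVec ubar = 0 → f xtil + G.mulVec util = 0 →
      0 ≤ ((h xbar + J.mulVec ubar) - (h xtil + J.mulVec util)) ⬝ᵥ
            Q.mulVec ((h xbar + J.mulVec ubar) - (h xtil + J.mulVec util))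
        + 2 * (((h xbar + J.mulVec ubar) - (h xtil + J.mulVec util)) ⬝ᵥ
            S.mulVec (ubar - util))
        + (ubar - util) ⬝ᵥ R.mulVec (ubar - util) := by
  intro xbar ubar xtil util h1 h2
  obtain ⟨V, gradV, _, _, _, _, hdiss⟩ := hEID xtil util h2
  have := hdiss xbar ubar
  rw [h1] at this
  simpa using this
end

section
/- (Equilibrium-independent passive systems.) Consider the square system ẋ = f(x) + Gu, y = Gᵀ∇V(x), where f : ℝⁿ → ℝⁿ, G ∈ ℝ^{n×m} has full column rank, and V : ℝⁿ → ℝ is continuously differentiable and μ-strongly convex for some μ > 0 (so that ∇V : ℝⁿ → ℝⁿ is a bijection). If the map −f ∘ (∇V)⁻¹ is monotone — equivalently, ⟨∇V(x₁) − ∇V(x₂), f(x₁) − f(x₂)⟩ ≤ 0 for all x₁, x₂ ∈ ℝⁿ — then the system is equilibrium-independent passive with Bregman storage: for every equilibrium pair (x̄, ū) with f(x̄) + Gū = 0, and for all x ∈ ℝⁿ and u ∈ ℝᵐ, ⟨∇V(x) − ∇V(x̄), f(x) + Gu⟩ ≤ ⟨Gᵀ∇V(x) − Gᵀ∇V(x̄),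 u − ū⟩. -/
open Matrix

/-- **Equilibrium-independent passive systems.** For the square system
`ẋ = f(x) + Gu`, `y = Gᵀ∇V(x)` with `V` continuously differentiable and μ-strongly convex,
if `⟨∇V(x₁) − ∇V(x₂), f(x₁) − f(x₂)⟩ ≤ 0` for all `x₁, x₂` (monotonicity of `−f ∘ (∇V)⁻¹`),
then the system is equilibrium-independent passive with Bregman storage. -/
theorem eid_passive_system {n m : ℕ}
    (f : (Fin n → ℝ) → (Fin n → ℝ))
    (G : Matrix (Fin n) (Fin m) ℝ) (hG : G.rank = m)
    (V : (Fin n → ℝ) → ℝ) (gradV : (Fin n → ℝ) → (Fin n → ℝ))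
    (hdiff : Differentiable ℝ V)
    (hgrad : ∀ x v, (fderiv ℝ V x) v = gradV x ⬝ᵥ v)
    (hgradcont : Continuous gradV)
    (μ : ℝ) (hμ : 0 < μ)
    (hsc : ∀ x z, μ * ((x - z) ⬝ᵥ (x - z)) ≤ (gradV x - gradV z) ⬝ᵥ (x - z))
    (hmono : ∀ x1 x2, (gradV x1 - gradV x2) ⬝ᵥ (f x1 - f x2) ≤ 0) :
    ∀ xbar ubar, f xbar + G.mulVec ubar = 0 →
      ∀ x u, (gradV x - gradV xbar) ⬝ᵥ (f x + G.mulVec u) ≤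
        (Gᵀ.mulVec (gradV x) - Gᵀ.mulVec (gradV xbar)) ⬝ᵥ (u - ubar) := by
  intro xbar ubar heq x u
  have hfx : f xbar = -G.mulVec ubar := eq_neg_of_add_eq_zero_left heq
  have hsplit : f x + G.mulVec u = (f x - f xbar) + G.mulVec (u - ubar) := by
    rw [Matrix.mulVec_sub, hfx]
    abel
  rw [hsplit, dotProduct_add]
  have h2 : (gradV x - gradV xbar) ⬝ᵥ G.mulVec (u - ubar) =
      (Gᵀ.mulVec (gradV x) - Gᵀ.mulVec (gradV xbar)) ⬝ᵥ (u - ubar) := by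
    rw [← Matrix.mulVec_sub, Matrix.mulVec_transpose, Matrix.dotProduct_mulVec]
  rw [h2]
  have := hmono x xbar
  linarith
end

section
/- (Equilibrium-independent passivity of port-Hamiltonian systems.) Consider the port-Hamiltonian system ẋ = (𝒥 − ℛ)∇H(x) + Gu + d, y = Gᵀ∇H(x), where H : ℝⁿ → ℝ is differentiable, 𝒥 = −𝒥ᵀ ∈ ℝ^{n×n}, ℛ = ℛᵀ ∈ ℝ^{n×n}, G ∈ ℝ^{n×m}, and d ∈ ℝⁿ is a constant disturbance. Let (x̄, ū) satisfy (𝒥 − ℛ)∇H(x̄) + Gū + d = 0 and set ȳ = Gᵀ∇H(x̄). Then for all x ∈ ℝⁿ and u ∈ ℝᵐ, with y = Gᵀ∇H(x): ⟨∇H(x) − ∇H(x̄), (𝒥 − ℛ)∇H(x) + Gu + d⟩ = −(∇H(x) − ∇H(x̄))ᵀℛ(∇H(x) − ∇H(x̄)) + (y − ȳ)ᵀ(u − ū); in particular, if ℛ is positive semidefinite, the left-hand side is at most (y − ȳ)ᵀ(u − ū). -/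
open Matrix

/-! Substituting the equilibrium relation for `d` turns the right-hand side of the dynamics into
`(𝒥 - ℛ) e + G (u - ū)` with `e = ∇H(x) - ∇H(x̄)`, so the disturbance drops out. Pairing with `e`,
the skew-symmetric part contributes nothing, `ℛ` contributes `-eᵀℛe`, and moving `G` across the
pairing gives `(Gᵀe)ᵀ(u - ū) = (y - ȳ)ᵀ(u - ū)`. -/

namespace Matrix

variable {ι κ α : Type*} [Fintype ι] [Fintype κ]

theorem dotProduct_mulVec_eq_transpose_mulVec_dotProduct [CommSemiring α]
    (v : ι → α) (A : Matrix ι κ α) (w : κ → α) : v ⬝ᵥ A *ᵥ w = Aᵀ *ᵥ v ⬝ᵥ w := by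
  rw [dotProduct_mulVec, mulVec_transpose]

theorem dotProduct_mulVec_self_eq_zero_of_transpose_eq_neg [CommRing α] [IsAddTorsionFree α]
    {J : Matrix ι ι α} (hJ : Jᵀ = -J) (v : ι → α) : v ⬝ᵥ J *ᵥ v = 0 := by
  refine self_eq_neg.mp ?_
  calc v ⬝ᵥ J *ᵥ v = Jᵀ *ᵥ v ⬝ᵥ v := dotProduct_mulVec_eq_transpose_mulVec_dotProduct v J v
    _ = -(v ⬝ᵥ J *ᵥ v) := by rw [hJ, neg_mulVec, neg_dotProduct, dotProduct_comm]

theorem mulVec_add_mulVec_add_eq_of_mulVec_add_mulVec_add_eq_zero [CommRing α]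
    (A : Matrix ι ι α) (G : Matrix ι κ α) {d zbar : ι → α} {ubar : κ → α}
    (heq : A *ᵥ zbar + G *ᵥ ubar + d = 0) (z : ι → α) (u : κ → α) :
    A *ᵥ z + G *ᵥ u + d = A *ᵥ (z - zbar) + G *ᵥ (u - ubar) := by
  rw [mulVec_sub, mulVec_sub]
  linear_combination (norm := module) heq

theorem dotProduct_sub_mulVec_add_mulVec_of_transpose_eq_neg [CommRing α] [IsAddTorsionFree α]
    {J : Matrix ι ι α} (hJ : Jᵀ = -J) (R : Matrix ι ι α) (G : Matrix ι κ α)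
    (e : ι → α) (w : κ → α) :
    e ⬝ᵥ ((J - R) *ᵥ e + G *ᵥ w) = -(e ⬝ᵥ R *ᵥ e) + Gᵀ *ᵥ e ⬝ᵥ w := by
  rw [dotProduct_add, sub_mulVec, dotProduct_sub,
    dotProduct_mulVec_self_eq_zero_of_transpose_eq_neg hJ,
    dotProduct_mulVec_eq_transpose_mulVec_dotProduct e G, zero_sub]

end Matrix

theorem port_hamiltonian_eid_passivity_general {n m : ℕ}
    (gradH : (Fin n → ℝ) → (Fin n → ℝ))
    (Jc Rc : Matrix (Fin n) (Fin n) ℝ)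
    (hJ : Jcᵀ = -Jc)
    (G : Matrix (Fin n) (Fin m) ℝ) (d : Fin n → ℝ)
    (xbar : Fin n → ℝ) (ubar : Fin m → ℝ)
    (heq : (Jc - Rc).mulVec (gradH xbar) + G.mulVec ubar + d = 0) :
    (∀ (x : Fin n → ℝ) (u : Fin m → ℝ),
      (gradH x - gradH xbar) ⬝ᵥ ((Jc - Rc).mulVec (gradH x) + G.mulVec u + d) =
        -((gradH x - gradH xbar) ⬝ᵥ Rc.mulVec (gradH x - gradH xbar))
        + (Gᵀ.mulVec (gradH x) - Gᵀ.mulVec (gradH xbar)) ⬝ᵥ (u - ubar)) ∧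
    (Rc.PosSemidef →
      ∀ (x : Fin n → ℝ) (u : Fin m → ℝ),
        (gradH x - gradH xbar) ⬝ᵥ ((Jc - Rc).mulVec (gradH x) + G.mulVec u + d) ≤
          (Gᵀ.mulVec (gradH x) - Gᵀ.mulVec (gradH xbar)) ⬝ᵥ (u - ubar)) := by
  have identity : ∀ (x : Fin n → ℝ) (u : Fin m → ℝ),
      (gradH x - gradH xbar) ⬝ᵥ ((Jc - Rc).mulVec (gradH x) + G.mulVec u + d) =
        -((gradH x - gradH xbar) ⬝ᵥ Rc.mulVec (gradH x - gradH xbar))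
        + (Gᵀ.mulVec (gradH x) - Gᵀ.mulVec (gradH xbar)) ⬝ᵥ (u - ubar) := fun x u => by
    rw [mulVec_add_mulVec_add_eq_of_mulVec_add_mulVec_add_eq_zero _ _ heq,
      dotProduct_sub_mulVec_add_mulVec_of_transpose_eq_neg hJ, ← mulVec_sub]
  refine ⟨identity, fun hR x u => ?_⟩
  have hdiss : 0 ≤ (gradH x - gradH xbar) ⬝ᵥ Rc *ᵥ (gradH x - gradH xbar) :=
    hR.dotProduct_mulVec_nonneg _
  linarith [identity x u]

/-- **Equilibrium-independent passivity of port-Hamiltonian systems.** For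
`ẋ = (𝒥 − ℛ)∇H(x) + Gu + d`, `y = Gᵀ∇H(x)` with `𝒥` skew-symmetric, `ℛ` symmetric and
`(x̄, ū)` a forced equilibrium, the incremental dissipation identity holds along
trajectories, and if `ℛ ⪰ 0` the passivity inequality follows. -/
theorem port_hamiltonian_eid_passivity {n m : ℕ}
    (H : (Fin n → ℝ) → ℝ) (gradH : (Fin n → ℝ) → (Fin n → ℝ))
    (hdiff : Differentiable ℝ H)
    (hgrad : ∀ x v, (fderiv ℝ H x) v = gradH x ⬝ᵥ v)
    (Jc Rc : Matrix (Fin n) (Fin n) ℝ)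
    (hJ : Jcᵀ = -Jc) (hR : Rc.IsSymm)
    (G : Matrix (Fin n) (Fin m) ℝ) (d : Fin n → ℝ)
    (xbar : Fin n → ℝ) (ubar : Fin m → ℝ)
    (heq : (Jc - Rc).mulVec (gradH xbar) + G.mulVec ubar + d = 0) :
    (∀ (x : Fin n → ℝ) (u : Fin m → ℝ),
      (gradH x - gradH xbar) ⬝ᵥ ((Jc - Rc).mulVec (gradH x) + G.mulVec u + d) =
        -((gradH x - gradH xbar) ⬝ᵥ Rc.mulVec (gradH x - gradH xbar))
        + (Gᵀ.mulVec (gradH x) - Gᵀ.mulVec (gradH xbar)) ⬝ᵥ (u - ubar)) ∧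
    (Rc.PosSemidef →
      ∀ (x : Fin n → ℝ) (u : Fin m → ℝ),
        (gradH x - gradH xbar) ⬝ᵥ ((Jc - Rc).mulVec (gradH x) + G.mulVec u + d) ≤
          (Gᵀ.mulVec (gradH x) - Gᵀ.mulVec (gradH xbar)) ⬝ᵥ (u - ubar)) :=
  port_hamiltonian_eid_passivity_general gradH Jc Rc hJ G d xbar ubar heq
end

section
/- (EID of a gradient system with feedthrough.) Let φ : ℝⁿ → ℝ be differentiable with ⟨x₁ − x₂, ∇φ(x₁) − ∇φ(x₂)⟩ ≥ μ‖x₁ − x₂‖² for all x₁, x₂ ∈ ℝⁿ and some μ > 0. Let g, j > 0 and ρ, ν ≥ 0 satisfy j − ρj² − ν > 0 and μ ≥ ρg² + ρ²g²j²/(j − ρj² − ν). Then for every pair (x̄, ū) ∈ ℝⁿ × ℝⁿ with ∇φ(x̄) = gū, and for all x, u ∈ ℝⁿ, setting y = gx + ju and ȳ = gx̄ + jū: ⟨x − x̄, −∇φ(x) + gu⟩ ≤ −ρ‖y − ȳ‖² − ν‖u − ū‖² + ⟨u − ū, y − ȳ⟩. Consequently, the system τẋ = −∇φ(x) + gu,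 y = gx + ju (τ diagonal positive definite) is EID with supply rate w(u, y) = −ρ yᵀy − ν uᵀu + uᵀy and storage family V_{x̄}(x) = ½(x − x̄)ᵀτ(x − x̄). -/
open Matrix

private lemma quad_key (a b c A B D : ℝ) (ha : 0 ≤ a) (hb : 0 ≤ b) (hc : 0 < c)
    (hac : b^2 ≤ a*c) (hA : 0 ≤ A) (hD : 0 ≤ D) (hCS : B^2 ≤ A*D) :
    0 ≤ a*A - 2*b*B + c*D := by
  rcases le_or_gt B 0 with hB | hB
  · nlinarith [mul_nonneg ha hA, mul_nonneg hc.le hD, mul_nonneg hb (neg_nonneg.2 hB)]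
  · have h3 : (2*b*c*B)^2 ≤ (b^2*A + c^2*D)^2 := by
      nlinarith [mul_nonneg (mul_nonneg (sq_nonneg b) (sq_nonneg c)) (sub_nonneg.2 hCS),
        sq_nonneg (b^2*A - c^2*D)]
    have hy : (0:ℝ) ≤ b^2*A + c^2*D := by positivity
    have h4 : 2*b*c*B ≤ b^2*A + c^2*D := abs_le_of_sq_le_sq' h3 hy |>.2
    nlinarith [h4, mul_nonneg (sub_nonneg.2 hac) hA, hc, mul_pos hc hc]


/-- **EID of a gradient system with feedthrough.** For `τẋ = −∇φ(x) + gu`,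
`y = gx + ju` with `φ` μ-strongly convex, `g, j > 0`, and `ρ, ν ≥ 0` satisfying
`j − ρj² − ν > 0` and `μ ≥ ρg² + ρ²g²j²/(j − ρj² − ν)`, the system is EID with supply
rate `w(u,y) = −ρ yᵀy − ν uᵀu + uᵀy` and storage family `V_x̄(x) = ½(x−x̄)ᵀτ(x−x̄)`. -/
theorem gradient_system_feedthrough_eid {n : ℕ}
    (φ : (Fin n → ℝ) → ℝ) (gradφ : (Fin n → ℝ) → (Fin n → ℝ))
    (hdiff : Differentiable ℝ φ)
    (hgrad : ∀ x v, (fderiv ℝ φ x) v = gradφ x ⬝ᵥ v)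
    (μ g j ρ ν : ℝ) (hμ : 0 < μ) (hg : 0 < g) (hj : 0 < j) (hρ : 0 ≤ ρ) (hν : 0 ≤ ν)
    (hsc : ∀ x1 x2 : Fin n → ℝ,
      μ * ((x1 - x2) ⬝ᵥ (x1 - x2)) ≤ (x1 - x2) ⬝ᵥ (gradφ x1 - gradφ x2))
    (h1 : 0 < j - ρ * j ^ 2 - ν)
    (h2 : ρ * g ^ 2 + ρ ^ 2 * g ^ 2 * j ^ 2 / (j - ρ * j ^ 2 - ν) ≤ μ) :
    (∀ xbar ubar : Fin n → ℝ, gradφ xbar = g • ubar →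
      ∀ x u : Fin n → ℝ,
        (x - xbar) ⬝ᵥ (-gradφ x + g • u) ≤
          -ρ * (((g • x + j • u) - (g • xbar + j • ubar)) ⬝ᵥ
              ((g • x + j • u) - (g • xbar + j • ubar)))
          - ν * ((u - ubar) ⬝ᵥ (u - ubar))
          + (u - ubar) ⬝ᵥ ((g • x + j • u) - (g • xbar + j • ubar))) ∧
    (∀ τ : Matrix (Fin n) (Fin n) ℝ, τ.PosDef → τ.IsDiag →
      ∀ xbar ubar : Fin n → ℝ, gradφ xbar = g • ubar →
      ∀ x u : Fin n → ℝ,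
        (τ.mulVec (x - xbar)) ⬝ᵥ (τ⁻¹.mulVec (-gradφ x + g • u)) ≤
          -ρ * (((g • x + j • u) - (g • xbar + j • ubar)) ⬝ᵥ
              ((g • x + j • u) - (g • xbar + j • ubar)))
          - ν * ((u - ubar) ⬝ᵥ (u - ubar))
          + (u - ubar) ⬝ᵥ ((g • x + j • u) - (g • xbar + j • ubar))) := by
  have main : ∀ xbar ubar : Fin n → ℝ, gradφ xbar = g • ubar →
      ∀ x u : Fin n → ℝ,
        (x - xbar) ⬝ᵥ (-gradφ x + g • u) ≤
          -ρ * (((g • x + j • u) - (g • xbar + j • ubar)) ⬝ᵥ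
              ((g • x + j • u) - (g • xbar + j • ubar)))
          - ν * ((u - ubar) ⬝ᵥ (u - ubar))
          + (u - ubar) ⬝ᵥ ((g • x + j • u) - (g • xbar + j • ubar)) := by
    intro xbar ubar heq x u
    set e : Fin n → ℝ := x - xbar with he
    set d : Fin n → ℝ := u - ubar with hd
    have hCS : (e ⬝ᵥ d)^2 ≤ (e ⬝ᵥ e) * (d ⬝ᵥ d) := by
      simpa [dotProduct, sq, mul_comm, mul_assoc, mul_left_comm] using
        Finset.sum_mul_sq_le_sq_mul_sq Finset.univ e d
    have hA : 0 ≤ e ⬝ᵥ e := Finset.sum_nonneg fun i _ => mul_self_nonneg _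
    have hD : 0 ≤ d ⬝ᵥ d := Finset.sum_nonneg fun i _ => mul_self_nonneg _
    have hsc' := hsc x xbar
    rw [← he] at hsc'
    have hv : -gradφ x + g • u = -(gradφ x - gradφ xbar) + g • d := by
      rw [heq, hd]; module
    have hy : (g • x + j • u) - (g • xbar + j • ubar) = g • e + j • d := by
      rw [he, hd]; module
    have hL : e ⬝ᵥ (-gradφ x + g • u)
        = -(e ⬝ᵥ (gradφ x - gradφ xbar)) + g * (e ⬝ᵥ d) := by
      rw [hv]; simp [dotProduct_add, dotProduct_neg, dotProduct_smul, smul_eq_mul]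
    have hyy : (g • e + j • d) ⬝ᵥ (g • e + j • d)
        = g^2*(e ⬝ᵥ e) + 2*g*j*(e ⬝ᵥ d) + j^2*(d ⬝ᵥ d) := by
      simp [dotProduct_add, add_dotProduct, dotProduct_smul, smul_dotProduct,
        smul_eq_mul, dotProduct_comm d e]
      ring
    have hdy : d ⬝ᵥ (g • e + j • d) = g*(e ⬝ᵥ d) + j*(d ⬝ᵥ d) := by
      simp [dotProduct_add, dotProduct_smul, smul_eq_mul, dotProduct_comm d e]
    rw [hy, hL, hyy, hdy]
    have hac : (ρ*g*j)^2 ≤ (μ - ρ*g^2) * (j - ρ*j^2 - ν) := by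
      have := (div_le_iff₀ h1).mp (by linarith : ρ^2*g^2*j^2/(j - ρ*j^2 - ν) ≤ μ - ρ*g^2)
      nlinarith [this]
    have ha : 0 ≤ μ - ρ*g^2 := by
      have hpos : 0 ≤ ρ^2*g^2*j^2/(j - ρ*j^2 - ν) := by positivity
      linarith
    have key := quad_key (μ - ρ*g^2) (ρ*g*j) (j - ρ*j^2 - ν)
      (e ⬝ᵥ e) (e ⬝ᵥ d) (d ⬝ᵥ d) ha (by positivity) h1 hac hA hD hCS
    nlinarith [key, hsc']
  refine ⟨main, ?_⟩
  intro τ hpd hdiag xbar ubar heq x u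
  have hsymm : τᵀ = τ := hdiag.isSymm
  have hdet : IsUnit τ.det := isUnit_iff_ne_zero.2 (ne_of_gt hpd.det_pos)
  have hred : ∀ v w : Fin n → ℝ, (τ *ᵥ v) ⬝ᵥ (τ⁻¹ *ᵥ w) = v ⬝ᵥ w := by
    intro v w
    calc (τ *ᵥ v) ⬝ᵥ (τ⁻¹ *ᵥ w) = (τ⁻¹ *ᵥ w) ⬝ᵥ (τ *ᵥ v) := dotProduct_comm _ _
      _ = ((τ⁻¹ *ᵥ w) ᵥ* τ) ⬝ᵥ v := dotProduct_mulVec _ _ _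
      _ = (τᵀ *ᵥ (τ⁻¹ *ᵥ w)) ⬝ᵥ v := by rw [mulVec_transpose]
      _ = ((τᵀ * τ⁻¹) *ᵥ w) ⬝ᵥ v := by rw [mulVec_mulVec]
      _ = w ⬝ᵥ v := by rw [hsymm, Matrix.mul_nonsing_inv _ hdet, one_mulVec]
      _ = v ⬝ᵥ w := dotProduct_comm _ _
  rw [hred]
  exact main xbar ubar heq x u
end
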